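/- For every integer m ≥ 2 and every r ∈ (0,1), m/(1 − r^m) − 1/(1 − r) < m − 1. -/
import Mathlib


/-- For every integer `m ≥ 2` and every `r ∈ (0,1)`,
`m/(1 - r^m) - 1/(1 - r) < m - 1`. -/
theorem gamblers_ruin_time_bound (m : ℕ) (hm : 2 ≤ m) (r : ℝ) (hr0 : 0 < r) (hr1 : r < 1) :
    (m : ℝ) / (1 - r ^ m) - 1 / (1 - r) < (m : ℝ) - 1 := by
  obtain ⟨n, rfl⟩ : ∃ n, m = n + 1 := ⟨m - 1, by omega⟩
  have hn : 1 ≤ n := by omega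
  have h1 : (0:ℝ) < 1 - r := by linarith
  have hrm : r ^ (n+1) < 1 := pow_lt_one₀ hr0.le hr1 (by omega)
  have h2 : (0:ℝ) < 1 - r ^ (n+1) := by linarith
  set S := ∑ j ∈ Finset.range n, r ^ j with hS
  have hgs := geom_sum_mul r n
  have hsum : (n:ℝ) * r ^ n < S := by
    calc (n:ℝ) * r ^ n = ∑ _j ∈ Finset.range n, r ^ n := by
          rw [Finset.sum_const, Finset.card_range, nsmul_eq_mul]
    _ < S := Finset.sum_lt_sum_of_nonempty (by simp; omega)
        (fun j hj => pow_lt_pow_right_of_lt_one₀ hr0 hr1 (Finset.mem_range.mp hj))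
  have hp1 : r ^ (n+1) = r ^ n * r := pow_succ r n
  have gap : 0 < 1 + (n:ℝ) * r ^ (n+1) - ((n:ℝ)+1) * r ^ n := by
    nlinarith [mul_lt_mul_of_pos_left hsum h1, hgs]
  have gapr := mul_pos hr0 gap
  rw [div_sub_div _ _ h2.ne' h1.ne', div_lt_iff₀ (mul_pos h2 h1)]
  push_cast
  nlinarith [gapr, hp1]
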